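/- arXiv:2404.14067 — 3 statements merged into one kernel-verified Lean document; each statement's English description precedes it below -/
import Mathlib

section
/- Let g : ℝ → ℂ be Lebesgue integrable and define γ̂(ω) := ∫_{−∞}^{∞} g(u) e^{iωu} du. Then the time-domain Lindblad operator equals the frequency-domain one: ∫_{−∞}^{∞} g(−s) · e^{iHs} A e^{−iHs} ds = Σ_{ω ∈ F} γ̂(ω) A(ω), where F := {E_l − E_k : 1 ≤ k, l ≤ N} is the finite set of Bohr frequencies of H. -/
open scoped Matrix Matrix.Norms.L2Operator

/-- The frequency component `A(ω) := Σ_{(k,l) : E_l − E_k = ω} P_k A P_l` of a matrix `A`,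
where `P_k` is the orthogonal projection onto the `k`-th eigenvector. -/
noncomputable def freqComp {N : ℕ} (E : Fin N → ℝ) (P : Fin N → Matrix (Fin N) (Fin N) ℂ)
    (A : Matrix (Fin N) (Fin N) ℂ) (ω : ℝ) : Matrix (Fin N) (Fin N) ℂ :=
  ∑ k : Fin N, ∑ l : Fin N, if E l - E k = ω then P k * A * P l else 0

/-!
Orthonormality makes `V = (of v)ᵀ`, the matrix with columns `v k`, unitary, and the eigenvalue
equations give `H = V diag(E) V⁻¹`; hence `exp (c • H) = ∑ k, exp (c E k) • P k`. So
`e^{iHs} A e^{-iHs} = ∑_{k,l} e^{-i(E l - E k)s} • P k A P l` is a trigonometric polynomial in `s`,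
each term of which integrates against `g (-s)` to `γ̂ (E l - E k) • P k A P l`; grouping the pairs
`(k, l)` by their Bohr frequency gives `∑ ω, γ̂ ω • A(ω)`.
-/

open Complex MeasureTheory

namespace Matrix

variable {n α : Type*} [Fintype n] [DecidableEq n]

lemma conjTranspose_mul_self_eq_one_of_orthonormal [CommSemiring α] [StarRing α]
    {v : n → n → α} (horth : ∀ k l, star (v k) ⬝ᵥ v l = if k = l then 1 else 0) :
    (of v)ᵀᴴ * (of v)ᵀ = 1 := by
  ext k l
  simpa [mul_apply, dotProduct, one_apply] using horth k l

lemma mul_transpose_of_eq_transpose_of_mul_diagonal [CommSemiring α]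
    {H : Matrix n n α} {v : n → n → α} {E : n → α} (heig : ∀ k, H *ᵥ v k = E k • v k) :
    H * (of v)ᵀ = (of v)ᵀ * diagonal E := by
  ext i k
  simpa [mul_apply, mulVec, dotProduct, diagonal_apply, mul_comm] using congrFun (heig k) i

lemma transpose_of_mul_diagonal_mul_conjTranspose [CommSemiring α] [StarRing α]
    (v : n → n → α) (c : n → α) :
    (of v)ᵀ * diagonal c * (of v)ᵀᴴ = ∑ k, c k • vecMulVec (v k) (star (v k)) := by
  ext i j
  simp only [mul_apply, sum_apply, smul_apply, vecMulVec_apply, diagonal_apply, mul_ite, mul_zero,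
    Finset.sum_ite_eq', Finset.mem_univ, if_true, conjTranspose_apply, transpose_apply, of_apply,
    Pi.star_apply, smul_eq_mul]
  exact Finset.sum_congr rfl fun k _ => by ring

variable {H : Matrix n n ℂ} {v : n → n → ℂ} {E : n → ℝ}

lemma exp_smul_eq_sum_of_orthonormal_eigenvectors
    (horth : ∀ k l, star (v k) ⬝ᵥ v l = if k = l then 1 else 0)
    (heig : ∀ k, H *ᵥ v k = (E k : ℂ) • v k) (c : ℂ) :
    NormedSpace.exp (c • H) = ∑ k, cexp (c * E k) • vecMulVec (v k) (star (v k)) := by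
  set V := (of v)ᵀ
  have hVV : Vᴴ * V = 1 := conjTranspose_mul_self_eq_one_of_orthonormal horth
  have hVV' : V * Vᴴ = 1 := mul_eq_one_comm.mp hVV
  have hcH : c • H = V * diagonal (fun k => c * E k) * V⁻¹ := by
    calc c • H = c • (H * V * Vᴴ) := by rw [mul_assoc, hVV', mul_one]
      _ = V * diagonal (fun k => c * E k) * V⁻¹ := by
        rw [mul_transpose_of_eq_transpose_of_mul_diagonal heig, inv_eq_left_inv hVV]
        simp only [← smul_eq_mul (a := c), ← Pi.smul_def, diagonal_smul, mul_smul_comm,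
          smul_mul_assoc]
        rfl
  rw [hcH, exp_conj _ _ ⟨⟨V, Vᴴ, hVV', hVV⟩, rfl⟩, exp_diagonal, inv_eq_left_inv hVV,
    transpose_of_mul_diagonal_mul_conjTranspose]
  simp [Complex.exp_eq_exp_ℂ]

lemma exp_I_smul_mul_mul_exp_neg_I_smul
    (horth : ∀ k l, star (v k) ⬝ᵥ v l = if k = l then 1 else 0)
    (heig : ∀ k, H *ᵥ v k = (E k : ℂ) • v k) (A : Matrix n n ℂ) (t : ℝ) :
    NormedSpace.exp ((I * t) • H) * A * NormedSpace.exp ((-(I * t)) • H) =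
      ∑ p : n × n, cexp (-(I * ↑(E p.2 - E p.1) * t)) •
        (vecMulVec (v p.1) (star (v p.1)) * A * vecMulVec (v p.2) (star (v p.2))) := by
  rw [exp_smul_eq_sum_of_orthonormal_eigenvectors horth heig,
    exp_smul_eq_sum_of_orthonormal_eigenvectors horth heig, Finset.sum_mul, Finset.sum_mul_sum,
    Fintype.sum_prod_type]
  refine Fintype.sum_congr _ _ fun k => Fintype.sum_congr _ _ fun l => ?_
  rw [smul_mul_assoc, smul_mul_smul, ← Complex.exp_add]
  congr 2
  push_cast
  ring

end Matrix

lemma MeasureTheory.Integrable.mul_cexp_I_mul {g : ℝ → ℂ} (hg : Integrable g) (ω : ℝ) :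
    Integrable fun u => g u * cexp (I * ω * u) := by
  refine hg.mul_bdd (c := 1) (by fun_prop) (ae_of_all _ fun u => ?_)
  rw [show I * ω * u = ((ω * u : ℝ) : ℂ) * I by push_cast; ring, norm_exp_ofReal_mul_I]

lemma integral_comp_neg_smul_sum_cexp_smul {ι F : Type*} [Fintype ι] [NormedAddCommGroup F]
    [NormedSpace ℂ F] [CompleteSpace F] {g : ℝ → ℂ} (hg : Integrable g) (ω : ι → ℝ) (M : ι → F) :
    ∫ s, g (-s) • ∑ j, cexp (-(I * ω j * s)) • M j =
      ∑ j, (∫ u, g u * cexp (I * ω j * u)) • M j := by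
  simp only [Finset.smul_sum, smul_smul]
  rw [integral_finsetSum _ fun j _ => ?_]
  · refine Finset.sum_congr rfl fun j _ => ?_
    rw [integral_smul_const, ← integral_neg_eq_self fun u : ℝ => g u * cexp (I * ω j * u)]
    simp only [ofReal_neg, mul_neg]
  · exact .smul_const (by simpa using (hg.mul_cexp_I_mul (ω j)).comp_neg) _

lemma sum_image_smul_freqComp {N : ℕ} (E : Fin N → ℝ) (P : Fin N → Matrix (Fin N) (Fin N) ℂ)
    (A : Matrix (Fin N) (Fin N) ℂ) (c : ℝ → ℂ) :
    ∑ ω ∈ Finset.image (fun p : Fin N × Fin N => E p.2 - E p.1) Finset.univ,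
        c ω • freqComp E P A ω =
      ∑ p : Fin N × Fin N, c (E p.2 - E p.1) • (P p.1 * A * P p.2) := by
  rw [← Finset.sum_fiberwise_of_maps_to fun p hp =>
    Finset.mem_image_of_mem (fun p : Fin N × Fin N => E p.2 - E p.1) hp]
  refine Finset.sum_congr rfl fun ω _ => ?_
  rw [freqComp, ← Fintype.sum_prod_type', Finset.smul_sum, Finset.sum_filter]
  refine Fintype.sum_congr _ _ fun p => ?_
  split_ifs with h <;> simp [h]

theorem integral_g_heisenberg_eq_sum_general {N : ℕ}
    (H : Matrix (Fin N) (Fin N) ℂ)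
    (v : Fin N → Fin N → ℂ) (E : Fin N → ℝ)
    (horth : ∀ k l : Fin N, dotProduct (star (v k)) (v l) = if k = l then 1 else 0)
    (heig : ∀ k : Fin N, H.mulVec (v k) = (E k : ℂ) • v k)
    (A : Matrix (Fin N) (Fin N) ℂ)
    (g : ℝ → ℂ) (hg : MeasureTheory.Integrable g) :
    ∫ s : ℝ, g (-s) •
        (NormedSpace.exp ((Complex.I * s) • H) * A * NormedSpace.exp ((-(Complex.I * s)) • H))
      = ∑ ω ∈ Finset.image (fun p : Fin N × Fin N => E p.2 - E p.1) Finset.univ,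
          (∫ u : ℝ, g u * Complex.exp (Complex.I * ω * u)) •
            freqComp E (fun k => Matrix.vecMulVec (v k) (star (v k))) A ω := by
  simp_rw [Matrix.exp_I_smul_mul_mul_exp_neg_I_smul horth heig A]
  rw [integral_comp_neg_smul_sum_cexp_smul hg, sum_image_smul_freqComp]

/-- for an integrable `g : ℝ → ℂ` with Fourier transform
`γ̂(ω) = ∫ g(u) e^{iωu} du`, the time-domain Lindblad operator equals the frequency-domain one:
`∫ g(−s) e^{iHs} A e^{−iHs} ds = Σ_{ω ∈ F} γ̂(ω) A(ω)`. -/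
theorem integral_g_heisenberg_eq_sum {N : ℕ}
    (H : Matrix (Fin N) (Fin N) ℂ) (hH : H.IsHermitian)
    (v : Fin N → Fin N → ℂ) (E : Fin N → ℝ)
    (horth : ∀ k l : Fin N, dotProduct (star (v k)) (v l) = if k = l then 1 else 0)
    (heig : ∀ k : Fin N, H.mulVec (v k) = (E k : ℂ) • v k)
    (A : Matrix (Fin N) (Fin N) ℂ)
    (g : ℝ → ℂ) (hg : MeasureTheory.Integrable g) :
    ∫ s : ℝ, g (-s) •
        (NormedSpace.exp ((Complex.I * s) • H) * A * NormedSpace.exp ((-(Complex.I * s)) • H))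
      = ∑ ω ∈ Finset.image (fun p : Fin N × Fin N => E p.2 - E p.1) Finset.univ,
          (∫ u : ℝ, g u * Complex.exp (Complex.I * ω * u)) •
            freqComp E (fun k => Matrix.vecMulVec (v k) (star (v k))) A ω :=
  integral_g_heisenberg_eq_sum_general H v E horth heig A g hg
end

section
/- The bath correlation matrix function is of positive type: for every m ∈ ℕ, all times t_1, …, t_m ∈ ℝ, and all vectors ξ_1, …, ξ_m ∈ ℂ^K, the number Σ_{i,j=1}^m Σ_{μ,ν=1}^K conj((ξ_i)_μ) (ξ_j)_ν C_{μν}(t_i − t_j) is a nonnegative real number. -/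
open scoped Matrix ComplexOrder

/-- The bath correlation function `C_{μν}(t) := Tr(e^{iH_B t} B_μ† e^{−iH_B t} B_ν ρ)`. -/
noncomputable def bathCorr {N K : ℕ} (HB : Matrix (Fin N) (Fin N) ℂ)
    (B : Fin K → Matrix (Fin N) (Fin N) ℂ) (ρ : Matrix (Fin N) (Fin N) ℂ)
    (μ ν : Fin K) (t : ℝ) : ℂ :=
  (NormedSpace.exp ((Complex.I * t) • HB) * (B μ)ᴴ *
      NormedSpace.exp ((-(Complex.I * t)) • HB) * B ν * ρ).trace

/-!
With `U t = e^{iHt}` and `X_i = ∑_μ ξ_{iμ} B_μ`, the `(i, j)` term of the sum is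
`Tr (Y_i† Y_j ρ)` for the Heisenberg-picture operators `Y_i = U(t_i) X_i U(-t_i)`: since `ρ`
commutes with `U`, the state is stationary, so `Tr (Y_i† Y_j ρ)` only depends on `t_i - t_j`.
Hence the whole sum is `Tr (Z† Z ρ) = Tr (Z ρ Z†) ≥ 0` with `Z = ∑_i Y_i`.
-/

namespace Matrix

variable {n : Type*} [Fintype n]

theorem PosSemidef.trace_conjTranspose_mul_self_mul_nonneg {ρ : Matrix n n ℂ}
    (hρ : ρ.PosSemidef) (Z : Matrix n n ℂ) : 0 ≤ (Zᴴ * Z * ρ).trace := by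
  rw [Matrix.mul_assoc, trace_mul_comm]
  exact (hρ.mul_mul_conjTranspose_same Z).trace_nonneg

variable [DecidableEq n]

noncomputable def expI (H : Matrix n n ℂ) (t : ℝ) : Matrix n n ℂ :=
  NormedSpace.exp ((Complex.I * t) • H)

noncomputable def heisenberg (H : Matrix n n ℂ) (t : ℝ) (X : Matrix n n ℂ) : Matrix n n ℂ :=
  expI H t * X * expI H (-t)

variable (H : Matrix n n ℂ)

theorem expI_add (s t : ℝ) : expI H (s + t) = expI H s * expI H t := by
  rw [expI, expI, expI, Complex.ofReal_add, mul_add, add_smul,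
    exp_add_of_commute _ _ (((Commute.refl H).smul_left _).smul_right _)]

theorem conjTranspose_expI (hH : H.IsHermitian) (t : ℝ) : (expI H t)ᴴ = expI H (-t) := by
  rw [expI, expI, ← exp_conjTranspose, conjTranspose_smul, hH.eq, star_mul', Complex.star_def,
    Complex.conj_I, Complex.conj_ofReal, Complex.ofReal_neg, neg_mul, mul_neg]

theorem commute_expI {ρ : Matrix n n ℂ} (h : Commute ρ H) (t : ℝ) : Commute ρ (expI H t) :=
  (h.smul_right _).exp_right

theorem conjTranspose_heisenberg (hH : H.IsHermitian) (t : ℝ) (X : Matrix n n ℂ) :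
    (heisenberg H t X)ᴴ = heisenberg H t Xᴴ := by
  rw [heisenberg, heisenberg, conjTranspose_mul, conjTranspose_mul, conjTranspose_expI H hH,
    conjTranspose_expI H hH, neg_neg, Matrix.mul_assoc]

theorem trace_heisenberg_mul_heisenberg_mul {ρ : Matrix n n ℂ} (hρ : Commute ρ H)
    (X Y : Matrix n n ℂ) (s t : ℝ) :
    (heisenberg H s X * heisenberg H t Y * ρ).trace = (heisenberg H (s - t) X * Y * ρ).trace := by
  have hρt : expI H (-t) * ρ = ρ * expI H (-t) := (commute_expI H hρ (-t)).eq.symm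
  calc (heisenberg H s X * heisenberg H t Y * ρ).trace
      = (expI H s * (X * expI H (-s + t) * Y) * ρ * expI H (-t)).trace := by
        rw [heisenberg, heisenberg, expI_add]
        simp only [Matrix.mul_assoc, hρt]
    _ = (expI H (-t) * expI H s * (X * expI H (-s + t) * Y) * ρ).trace := by
        rw [trace_mul_comm]
        simp only [Matrix.mul_assoc]
    _ = (heisenberg H (s - t) X * Y * ρ).trace := by
        rw [heisenberg, ← expI_add, show -(s - t) = -s + t by ring, show -t + s = s - t by ring]
        simp only [Matrix.mul_assoc]

theorem sum_mul_trace_heisenberg_mul {K : Type*} [Fintype K] (ρ : Matrix n n ℂ)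
    (B : K → Matrix n n ℂ) (a b : K → ℂ) (t : ℝ) :
    ∑ μ, ∑ ν, star (a μ) * b ν * (heisenberg H t (B μ)ᴴ * B ν * ρ).trace =
      (heisenberg H t (∑ μ, a μ • B μ)ᴴ * (∑ ν, b ν • B ν) * ρ).trace := by
  simp only [heisenberg, conjTranspose_sum, conjTranspose_smul, Matrix.sum_mul,
    Matrix.smul_mul, Matrix.mul_smul, trace_sum, trace_smul, smul_eq_mul, Finset.mul_sum]
  rw [Finset.sum_comm]
  exact Fintype.sum_congr _ _ fun μ ↦ Fintype.sum_congr _ _ fun ν ↦ by ring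

end Matrix

open Matrix

theorem bathCorr_eq_trace_heisenberg {N K : ℕ} (HB : Matrix (Fin N) (Fin N) ℂ)
    (B : Fin K → Matrix (Fin N) (Fin N) ℂ) (ρ : Matrix (Fin N) (Fin N) ℂ) (μ ν : Fin K)
    (t : ℝ) :
    bathCorr HB B ρ μ ν t = (heisenberg HB t (B μ)ᴴ * B ν * ρ).trace := by
  rw [bathCorr, heisenberg, expI, expI, Complex.ofReal_neg, mul_neg]

/-- the bath correlation matrix function is of positive type. -/
theorem bathCorr_posType {N K : ℕ} (HB : Matrix (Fin N) (Fin N) ℂ) (hHB : HB.IsHermitian)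
    (ρ : Matrix (Fin N) (Fin N) ℂ) (hρ : ρ.PosSemidef) (hcomm : ρ * HB = HB * ρ)
    (B : Fin K → Matrix (Fin N) (Fin N) ℂ)
    (m : ℕ) (t : Fin m → ℝ) (ξ : Fin m → Fin K → ℂ) :
    0 ≤ ∑ i : Fin m, ∑ j : Fin m, ∑ μ : Fin K, ∑ ν : Fin K,
        (starRingEnd ℂ) (ξ i μ) * ξ j ν * bathCorr HB B ρ μ ν (t i - t j) := by
  let X i := ∑ μ, ξ i μ • B μ
  let Y i := heisenberg HB (t i) (X i)
  calc 0 ≤ ((∑ i, Y i)ᴴ * (∑ j, Y j) * ρ).trace :=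
        hρ.trace_conjTranspose_mul_self_mul_nonneg _
    _ = ∑ i, ∑ j, ((Y i)ᴴ * Y j * ρ).trace := by
        simp only [conjTranspose_sum, Matrix.sum_mul, Matrix.mul_sum, trace_sum]
        exact Finset.sum_comm
    _ = ∑ i, ∑ j, (heisenberg HB (t i - t j) (X i)ᴴ * X j * ρ).trace := by
        simp only [Y, conjTranspose_heisenberg HB hHB, trace_heisenberg_mul_heisenberg_mul HB hcomm]
    _ = _ := by
        simp only [bathCorr_eq_trace_heisenberg, sum_mul_trace_heisenberg_mul, starRingEnd_apply, X]
end

section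
/- For every Hermitian N×N matrix ρ, the frequency-expanded Redfield dissipator equals a pseudo-Lindblad form plus a Lamb-shift commutator: Σ_{μ,ν=1}^K Σ_{ω,ω′∈F} [ Γ_{μν}(ω) (A_ν(ω) ρ A_μ(ω′)† − A_μ(ω′)† A_ν(ω) ρ) + conj(Γ_{μν}(ω)) (A_μ(ω′) ρ A_ν(ω)† − ρ A_ν(ω)† A_μ(ω′)) ] = −i[H_LS, ρ] + Σ_{μ,ν=1}^K Σ_{ω,ω′∈F} [ (γ_{μν}(ω) + γ_{μν}(ω′))/2 + i(η_{μν}(ω) − η_{μν}(ω′)) ] · (A_ν(ω) ρ A_μ(ω′)† − ½{A_μ(ω′)† A_ν(ω), ρ}), where H_LS := Σ_{μ,ν=1}^K Σ_{ω,ω′∈F} [ (η_{μν}(ω) + η_{μν}(ω′))/2 + i(γ_{μν}(ω′) − γ_{μν}(ω))/4 ] A_μ(ω′)† A_ν(ω) and {X, ρ} := Xρ + ρX. -/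
open scoped Matrix

noncomputable section

/-- `γ_{μν}(ω) := Γ_{μν}(ω) + conj (Γ_{νμ}(ω))`. -/
def gammaOf {K : ℕ} (Γ : Fin K → Fin K → ℝ → ℂ) (μ ν : Fin K) (ω : ℝ) : ℂ :=
  Γ μ ν ω + (starRingEnd ℂ) (Γ ν μ ω)

/-- `η_{μν}(ω) := (Γ_{μν}(ω) − conj (Γ_{νμ}(ω)))/(2i)`. -/
def etaOf {K : ℕ} (Γ : Fin K → Fin K → ℝ → ℂ) (μ ν : Fin K) (ω : ℝ) : ℂ :=
  (Γ μ ν ω - (starRingEnd ℂ) (Γ ν μ ω)) / (2 * Complex.I)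

/-- The Lamb-shift Hamiltonian
`H_LS := Σ_{μ,ν} Σ_{ω,ω′} [(η_{μν}(ω) + η_{μν}(ω′))/2 + i(γ_{μν}(ω′) − γ_{μν}(ω))/4] A_μ(ω′)† A_ν(ω)`. -/
def lambShift {K N : ℕ} (F : Finset ℝ) (A : Fin K → ℝ → Matrix (Fin N) (Fin N) ℂ)
    (Γ : Fin K → Fin K → ℝ → ℂ) : Matrix (Fin N) (Fin N) ℂ :=
  ∑ μ : Fin K, ∑ ν : Fin K, ∑ ω ∈ F, ∑ ω' ∈ F,
    ((etaOf Γ μ ν ω + etaOf Γ μ ν ω') / 2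
        + Complex.I * (gammaOf Γ μ ν ω' - gammaOf Γ μ ν ω) / 4) • ((A μ ω')ᴴ * A ν ω)

open Complex in
theorem term_key (p q p' q' : ℂ) {N : ℕ} (X Q R : Matrix (Fin N) (Fin N) ℂ) :
    p • (X - Q) + (starRingEnd ℂ) q' • (X - R)
      = (-I) • ((((p - (starRingEnd ℂ) q)/(2*I) + (p' - (starRingEnd ℂ) q')/(2*I)) / 2
            + I * ((p' + (starRingEnd ℂ) q') - (p + (starRingEnd ℂ) q)) / 4) • Q
          - (((p - (starRingEnd ℂ) q)/(2*I) + (p' - (starRingEnd ℂ) q')/(2*I)) / 2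
            + I * ((p' + (starRingEnd ℂ) q') - (p + (starRingEnd ℂ) q)) / 4) • R)
        + (((p + (starRingEnd ℂ) q) + (p' + (starRingEnd ℂ) q')) / 2
            + I * ((p - (starRingEnd ℂ) q)/(2*I) - (p' - (starRingEnd ℂ) q')/(2*I))) •
          (X - (1/2 : ℂ) • (Q + R)) := by
  have h2I : ∀ x : ℂ, x / (2*I) = -(I/2) * x := by
    intro x
    rw [div_eq_mul_inv, mul_inv, Complex.inv_I]
    ring
  simp only [h2I]
  match_scalars
  · linear_combination ((p + (starRingEnd ℂ) q' - (starRingEnd ℂ) q - p')/2) * Complex.I_sq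
  · linear_combination ((p' + (starRingEnd ℂ) q' - p - (starRingEnd ℂ) q)/4
      - (p - (starRingEnd ℂ) q)/2) * Complex.I_sq
  · linear_combination ((p' - (starRingEnd ℂ) q')/2
      - (p' + (starRingEnd ℂ) q' - p - (starRingEnd ℂ) q)/4) * Complex.I_sq


/-- the frequency-expanded Redfield dissipator equals a pseudo-Lindblad form plus
a Lamb-shift commutator. -/
theorem redfield_dissipator_pseudoLindblad {K N : ℕ} (F : Finset ℝ)
    (A : Fin K → ℝ → Matrix (Fin N) (Fin N) ℂ) (Γ : Fin K → Fin K → ℝ → ℂ)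
    (ρ : Matrix (Fin N) (Fin N) ℂ) (hρ : ρ.IsHermitian) :
    ∑ μ : Fin K, ∑ ν : Fin K, ∑ ω ∈ F, ∑ ω' ∈ F,
        (Γ μ ν ω • (A ν ω * ρ * (A μ ω')ᴴ - (A μ ω')ᴴ * A ν ω * ρ)
          + (starRingEnd ℂ) (Γ μ ν ω) • (A μ ω' * ρ * (A ν ω)ᴴ - ρ * ((A ν ω)ᴴ * A μ ω')))
      = (-Complex.I) • (lambShift F A Γ * ρ - ρ * lambShift F A Γ)
        + ∑ μ : Fin K, ∑ ν : Fin K, ∑ ω ∈ F, ∑ ω' ∈ F,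
            ((gammaOf Γ μ ν ω + gammaOf Γ μ ν ω') / 2
                + Complex.I * (etaOf Γ μ ν ω - etaOf Γ μ ν ω')) •
              (A ν ω * ρ * (A μ ω')ᴴ
                - (1 / 2 : ℂ) • ((A μ ω')ᴴ * A ν ω * ρ + ρ * ((A μ ω')ᴴ * A ν ω))) := by
  have hconj :
      (∑ μ : Fin K, ∑ ν : Fin K, ∑ ω ∈ F, ∑ ω' ∈ F,
          (starRingEnd ℂ) (Γ μ ν ω) • (A μ ω' * ρ * (A ν ω)ᴴ - ρ * ((A ν ω)ᴴ * A μ ω')))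
        = ∑ μ : Fin K, ∑ ν : Fin K, ∑ ω ∈ F, ∑ ω' ∈ F,
          (starRingEnd ℂ) (Γ ν μ ω') • (A ν ω * ρ * (A μ ω')ᴴ - ρ * ((A μ ω')ᴴ * A ν ω)) := by
    rw [Finset.sum_comm]
    refine Finset.sum_congr rfl fun μ _ => ?_
    refine Finset.sum_congr rfl fun ν _ => ?_
    exact Finset.sum_comm
  calc ∑ μ : Fin K, ∑ ν : Fin K, ∑ ω ∈ F, ∑ ω' ∈ F,
        (Γ μ ν ω • (A ν ω * ρ * (A μ ω')ᴴ - (A μ ω')ᴴ * A ν ω * ρ)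
          + (starRingEnd ℂ) (Γ μ ν ω) • (A μ ω' * ρ * (A ν ω)ᴴ - ρ * ((A ν ω)ᴴ * A μ ω')))
      = ∑ μ : Fin K, ∑ ν : Fin K, ∑ ω ∈ F, ∑ ω' ∈ F,
        (Γ μ ν ω • (A ν ω * ρ * (A μ ω')ᴴ - (A μ ω')ᴴ * A ν ω * ρ)
          + (starRingEnd ℂ) (Γ ν μ ω') • (A ν ω * ρ * (A μ ω')ᴴ - ρ * ((A μ ω')ᴴ * A ν ω))) := by
        simp only [Finset.sum_add_distrib]
        rw [hconj]
    _ = _ := by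
        simp only [lambShift, Finset.sum_mul, Finset.mul_sum, smul_mul_assoc, mul_smul_comm,
          ← Finset.sum_sub_distrib, Finset.smul_sum, ← Finset.sum_add_distrib]
        refine Finset.sum_congr rfl fun μ _ => ?_
        refine Finset.sum_congr rfl fun ν _ => ?_
        refine Finset.sum_congr rfl fun ω _ => ?_
        refine Finset.sum_congr rfl fun ω' _ => ?_
        simpa only [gammaOf, etaOf] using
          term_key (Γ μ ν ω) (Γ ν μ ω) (Γ μ ν ω') (Γ ν μ ω')
            (A ν ω * ρ * (A μ ω')ᴴ) ((A μ ω')ᴴ * A ν ω * ρ) (ρ * ((A μ ω')ᴴ * A ν ω))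
end
end
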